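/- The stopped semimartingale X^τ satisfies the structure condition: its finite-variation part A^{X^{τ,i}} is absolutely continuous with respect to ⟨M^{X^{τ,i}}⟩ with predictable density λ^i_u = (μ^i(u,S^τ_u)−r^i_u)/((σ^i(u,S^τ_u))² S^{τ,i}_u/B^f_u), i.e. A_t^{X^{τ,i}} = ∫_0^t λ^i_u d⟨M^{X^{τ,i}}⟩_u for all t ∈ [0, τ∧T], and the mean-variance tradeoff K^{X^τ}_T is finite almost surely. -/

import Mathlib

open MeasureTheory Set intervalIntegral

/-- The stopped semimartingale `X^τ` satisfies the structure condition:
its finite-variation part `A^{X^{τ,i}}`, with density `(S^{τ,i}/B^f)(μ^i − r^i)` w.r.t. `dt`,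
is absolutely continuous w.r.t. `⟨M^{X^{τ,i}}⟩` (which has density `(S^{τ,i}/B^f)²(σ^i)²`)
with predictable density `λ^i_u = (μ^i − r^i)/((σ^i)² S^{τ,i}_u/B^f_u)`, i.e.
`A^{X^{τ,i}}_t = ∫_0^t λ^i_u d⟨M^{X^{τ,i}}⟩_u` for all `t ∈ [0, τ∧T]`, and the
mean-variance tradeoff `K^{X^τ}_{τ∧T} = Σ_i ∫_0^{τ∧T} (λ^i_u)² d⟨M^{X^{τ,i}}⟩_u`
is finite almost surely. -/
theorem structure_condition_stopped
    {Ω : Type*} {mΩ : MeasurableSpace Ω} (P : Measure Ω) [IsProbabilityMeasure P]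
    (d : ℕ) (hd : 0 < d) (T : ℝ) (hT : 0 < T)
    (τ : Ω → ℝ) (hτ : ∀ ω, 0 ≤ τ ω)
    -- stopped asset prices, funding account, coefficients (evaluated along the stopped path)
    (S : Fin d → ℝ → Ω → ℝ) (hS : ∀ i t ω, 0 < S i t ω)
    (Bf : ℝ → Ω → ℝ) (hBf : ∀ t ω, 0 < Bf t ω)
    (σ : Fin d → ℝ → Ω → ℝ) (hσ : ∀ i t ω, σ i t ω ≠ 0)
    (μ : Fin d → ℝ → Ω → ℝ) (r : Fin d → ℝ → Ω → ℝ)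
    (K : Fin d → ℝ) (hK : ∀ i, 0 < K i)
    (hbound : ∀ᵐ ω ∂P, ∀ i, ∀ u ∈ Set.Icc (0 : ℝ) T,
      |(μ i u ω - r i u ω) / σ i u ω| ≤ K i)
    -- the predictable density λ^i
    (lam : Fin d → ℝ → Ω → ℝ)
    (hlam : ∀ i u ω, lam i u ω =
      (μ i u ω - r i u ω) / ((σ i u ω) ^ 2 * (S i u ω / Bf u ω))) :
    ∀ᵐ ω ∂P,
      (∀ i, ∀ t ∈ Set.Icc (0 : ℝ) (min (τ ω) T),
        -- A^{X^{τ,i}}_t = ∫_0^t λ^i_u d⟨M^{X^{τ,i}}⟩_u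
        (∫ u in (0 : ℝ)..t, (S i u ω / Bf u ω) * (μ i u ω - r i u ω))
          = ∫ u in (0 : ℝ)..t,
              lam i u ω * ((S i u ω / Bf u ω) ^ 2 * (σ i u ω) ^ 2))
      ∧
      -- finiteness of the mean-variance tradeoff K^{X^τ}_{τ∧T}
      (∑ i, ∫⁻ u in Set.Ioc (0 : ℝ) (min (τ ω) T),
          ENNReal.ofReal
            ((lam i u ω) ^ 2 * ((S i u ω / Bf u ω) ^ 2 * (σ i u ω) ^ 2))) < ⊤ := by
  filter_upwards [hbound] with ω hb
  have key : ∀ i u, lam i u ω * ((S i u ω / Bf u ω) ^ 2 * (σ i u ω) ^ 2)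
      = (S i u ω / Bf u ω) * (μ i u ω - r i u ω) := by
    intro i u
    have h1 : Bf u ω ≠ 0 := ne_of_gt (hBf u ω)
    have h2 : S i u ω ≠ 0 := ne_of_gt (hS i u ω)
    have h3 := hσ i u ω
    rw [hlam]
    field_simp
  have key2 : ∀ i u, (lam i u ω) ^ 2 * ((S i u ω / Bf u ω) ^ 2 * (σ i u ω) ^ 2)
      = ((μ i u ω - r i u ω) / σ i u ω) ^ 2 := by
    intro i u
    have h1 : Bf u ω ≠ 0 := ne_of_gt (hBf u ω)
    have h2 : S i u ω ≠ 0 := ne_of_gt (hS i u ω)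
    have h3 := hσ i u ω
    rw [hlam]
    field_simp
  constructor
  · intro i t _
    exact intervalIntegral.integral_congr fun u _ => (key i u).symm
  · have hlt : ∀ i : Fin d, (∫⁻ u in Set.Ioc (0 : ℝ) (min (τ ω) T),
        ENNReal.ofReal ((lam i u ω) ^ 2 * ((S i u ω / Bf u ω) ^ 2 * (σ i u ω) ^ 2))) < ⊤ := by
      intro i
      have hle : (∫⁻ u in Set.Ioc (0 : ℝ) (min (τ ω) T),
          ENNReal.ofReal ((lam i u ω) ^ 2 * ((S i u ω / Bf u ω) ^ 2 * (σ i u ω) ^ 2)))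
          ≤ ∫⁻ _ in Set.Ioc (0 : ℝ) (min (τ ω) T), ENNReal.ofReal ((K i) ^ 2) := by
        refine setLIntegral_mono' measurableSet_Ioc fun u hu => ?_
        rw [key2]
        refine ENNReal.ofReal_le_ofReal ?_
        have hu' : u ∈ Set.Icc (0 : ℝ) T :=
          ⟨le_of_lt hu.1, le_trans hu.2 (min_le_right _ _)⟩
        have := hb i u hu'
        calc ((μ i u ω - r i u ω) / σ i u ω) ^ 2
            = |(μ i u ω - r i u ω) / σ i u ω| ^ 2 := (sq_abs _).symm
          _ ≤ (K i) ^ 2 := by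
              exact pow_le_pow_left₀ (abs_nonneg _) this 2
      refine lt_of_le_of_lt hle ?_
      rw [lintegral_const]
      exact ENNReal.mul_lt_top ENNReal.ofReal_lt_top (by
        simp [Real.volume_Ioc])
    exact ENNReal.sum_lt_top.mpr fun i _ => hlt i
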